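/- Let k, ρ, φ, μ be as in the Euler–Lagrange setting (φ ≤ μ a.e. where ρ = 1, φ = μ a.e. where 0 < ρ < 1, φ ≥ μ a.e. where ρ = 0, with 0 ≤ ρ ≤ 1 and ∫ρ = m), and suppose inf φ = μ. Then for every 0 < m' < m, E(m') ≤ E(m) - μ(m² - (m')²)/(2m). -/
import Mathlib


open MeasureTheory Metric Filter

/-- The interaction energy with a general kernel `k` in `ℝ³`. -/
noncomputable def genEnergy (k : EuclideanSpace ℝ (Fin 3) → ℝ)
    (ρ : EuclideanSpace ℝ (Fin 3) → ℝ) : ℝ :=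
  (1 / 2) * ∫ x, ∫ y, ρ x * k (x - y) * ρ y

/-- The minimal energy `E(m)` over densities `0 ≤ ρ ≤ 1` of mass `m`. -/
noncomputable def genE (k : EuclideanSpace ℝ (Fin 3) → ℝ) (m : ℝ) : ℝ :=
  sInf {e : ℝ | ∃ σ : EuclideanSpace ℝ (Fin 3) → ℝ,
    Measurable σ ∧ (∀ x, 0 ≤ σ x ∧ σ x ≤ 1) ∧ Integrable σ ∧ (∫ x, σ x) = m ∧
    e = genEnergy k σ}

/-- If the minimizer `ρ` for `E(m)` has potential `φ` satisfying the
Euler–Lagrange conditions with multiplier `μ` and `inf φ = μ`, then for every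
`0 < m' < m` one has `E(m') ≤ E(m) - μ (m² - m'²)/(2m)` (using the trial state
`(m'/m) ρ`). -/
theorem energy_decrease_when_inf_potential_eq_multiplier
    (k : EuclideanSpace ℝ (Fin 3) → ℝ) (hk0 : ∀ x, 0 ≤ k x)
    (hkloc : LocallyIntegrable k)
    (m μ : ℝ) (hm : 0 < m)
    (ρ : EuclideanSpace ℝ (Fin 3) → ℝ) (hmeas : Measurable ρ)
    (hρ : ∀ x, 0 ≤ ρ x ∧ ρ x ≤ 1) (hint : Integrable ρ)
    (hmass : (∫ x, ρ x) = m)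
    (hmin : genEnergy k ρ = genE k m)
    (φ : EuclideanSpace ℝ (Fin 3) → ℝ)
    (hφ : φ = fun x => ∫ y, k (x - y) * ρ y)
    (hEL : ∀ᵐ x : EuclideanSpace ℝ (Fin 3),
      (ρ x = 1 → φ x ≤ μ) ∧ (0 < ρ x → ρ x < 1 → φ x = μ) ∧ (ρ x = 0 → μ ≤ φ x))
    (hinf : (⨅ x, φ x) = μ) :
    ∀ m' : ℝ, 0 < m' → m' < m →
      genE k m' ≤ genE k m - μ * (m ^ 2 - m' ^ 2) / (2 * m) := by
  intro m' hm' hm'm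
  set c : ℝ := m' / m with hc
  have hc0 : 0 ≤ c := div_nonneg hm'.le hm.le
  have hc1 : c ≤ 1 := by rw [hc, div_le_one hm]; linarith
  -- φ is nonnegative
  have hφ0 : ∀ x, 0 ≤ φ x := by
    intro x; rw [hφ]
    exact integral_nonneg fun y => mul_nonneg (hk0 _) (hρ y).1
  have hμle : ∀ x, μ ≤ φ x := by
    intro x
    rw [← hinf]
    exact ciInf_le ⟨0, by rintro _ ⟨y, rfl⟩; exact hφ0 y⟩ x
  -- E(m) = μ m / 2
  have h1 : genEnergy k ρ = (1 / 2) * ∫ x, ρ x * φ x := by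
    unfold genEnergy
    congr 1
    refine integral_congr_ae (Filter.Eventually.of_forall fun x => ?_)
    rw [hφ]
    simp only [mul_assoc]
    exact integral_const_mul _ _
  have hae : (fun x => ρ x * φ x) =ᵐ[volume] fun x => μ * ρ x := by
    filter_upwards [hEL] with x hx
    by_cases h0 : ρ x = 0
    · simp [h0]
    · have hpos : 0 < ρ x := lt_of_le_of_ne (hρ x).1 (Ne.symm h0)
      by_cases h1 : ρ x = 1
      · have heq : φ x = μ := le_antisymm (hx.1 h1) (hμle x)
        rw [heq]; ring
      · have heq : φ x = μ := hx.2.1 hpos (lt_of_le_of_ne (hρ x).2 h1)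
        rw [heq]; ring
  have hEρ : genEnergy k ρ = (1 / 2) * (μ * m) := by
    rw [h1, integral_congr_ae hae, integral_const_mul, hmass]
  -- scaling of energy
  have hscale : genEnergy k (fun x => c * ρ x) = c ^ 2 * genEnergy k ρ := by
    unfold genEnergy
    have hpt : ∀ x y : EuclideanSpace ℝ (Fin 3),
        (c * ρ x) * k (x - y) * (c * ρ y) = c ^ 2 * (ρ x * k (x - y) * ρ y) := by
      intros; ring
    simp_rw [hpt, integral_const_mul]
    ring
  -- the trial state is admissible for mass m'
  have hmem : c ^ 2 * genEnergy k ρ ∈ {e : ℝ | ∃ σ : EuclideanSpace ℝ (Fin 3) → ℝ,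
      Measurable σ ∧ (∀ x, 0 ≤ σ x ∧ σ x ≤ 1) ∧ Integrable σ ∧ (∫ x, σ x) = m' ∧
      e = genEnergy k σ} := by
    refine ⟨fun x => c * ρ x, hmeas.const_mul c, ?_, hint.const_mul c, ?_, hscale.symm⟩
    · intro x
      constructor
      · exact mul_nonneg hc0 (hρ x).1
      · calc c * ρ x ≤ c * 1 := mul_le_mul_of_nonneg_left (hρ x).2 hc0
          _ ≤ 1 := by linarith
    · rw [integral_const_mul, hmass, hc]
      field_simp
  -- the set is bounded below by 0
  have hbdd : ∀ e ∈ {e : ℝ | ∃ σ : EuclideanSpace ℝ (Fin 3) → ℝ,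
      Measurable σ ∧ (∀ x, 0 ≤ σ x ∧ σ x ≤ 1) ∧ Integrable σ ∧ (∫ x, σ x) = m' ∧
      e = genEnergy k σ}, (0:ℝ) ≤ e := by
    rintro e ⟨σ, -, hσb, -, -, rfl⟩
    unfold genEnergy
    have : 0 ≤ ∫ x, ∫ y, σ x * k (x - y) * σ y :=
      integral_nonneg fun x => integral_nonneg fun y =>
        mul_nonneg (mul_nonneg (hσb x).1 (hk0 _)) (hσb y).1
    linarith
  have hle : genE k m' ≤ c ^ 2 * genEnergy k ρ := csInf_le ⟨0, hbdd⟩ hmem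
  rw [hEρ] at hle
  rw [← hmin, hEρ]
  have harith : c ^ 2 * ((1 / 2) * (μ * m)) =
      (1 / 2) * (μ * m) - μ * (m ^ 2 - m' ^ 2) / (2 * m) := by
    rw [hc]; field_simp; ring
  linarith
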